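/- For reversible transition probabilities, if the measure-capacity inequality ν[A] Ψ⁻¹(K/ν[A]) ≤ C · cap(A,B) holds for all A ⊂ S\B, then for every f ∈ ℓ²(μ) vanishing on B one has ‖f²‖_{Φ,ν,K} ≤ 4C · E(f). -/

import Mathlib

open scoped ENNReal
open Filter

/-- A Young function: convex on `[0,∞)`, vanishing at `0` (including in the limit),
and tending to `∞` at `∞`. Values are taken in `[0,∞]`. -/
def IsYoung (Φ : ℝ → ℝ≥0∞) : Prop :=
  (∀ a ∈ Set.Ici (0:ℝ), ∀ b ∈ Set.Ici (0:ℝ), ∀ t ∈ Set.Icc (0:ℝ) 1,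
      Φ (t * a + (1 - t) * b) ≤ ENNReal.ofReal t * Φ a + ENNReal.ofReal (1 - t) * Φ b)
  ∧ Φ 0 = 0
  ∧ Filter.Tendsto Φ (nhdsWithin 0 (Set.Ioi 0)) (nhds 0)
  ∧ Filter.Tendsto Φ Filter.atTop Filter.atTop

/-- The Legendre–Fenchel dual `Ψ(r) = sup_{s ≥ 0} (s r − Φ(s))`. -/
noncomputable def legendreDual (Φ : ℝ → ℝ≥0∞) (r : ℝ) : ℝ≥0∞ :=
  ⨆ s : Set.Ici (0:ℝ), ENNReal.ofReal (s.1 * r) - Φ s.1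

/-- The pseudo-inverse `Ψ⁻¹(t) = inf{s ∈ [0,∞] : Ψ(s) > t}`. -/
noncomputable def pseudoInv (Ψ : ℝ → ℝ≥0∞) (t : ℝ≥0∞) : ℝ≥0∞ :=
  sInf ((fun s : ℝ => ENNReal.ofReal s) '' {s : ℝ | 0 ≤ s ∧ t < Ψ s})

/-- The `K`-Orlicz norm `‖f‖_{Φ,μ,K} = sup{ E_μ[|f| g] : g ≥ 0, E_μ[Ψ(g)] ≤ K }`,
written in terms of the dual function `Ψ`. -/
noncomputable def orliczNorm {S : Type*} (μ : S → ℝ) (Ψ : ℝ → ℝ≥0∞) (K : ℝ≥0∞)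
    (f : S → ℝ) : ℝ≥0∞ :=
  ⨆ g : {g : S → ℝ // (∀ x, 0 ≤ g x) ∧ ∑' x, ENNReal.ofReal (μ x) * Ψ (g x) ≤ K},
    ∑' x, ENNReal.ofReal (μ x * |f x| * g.1 x)

/-- The measure of a set `A`, `μ[A] = ∑_{x ∈ A} μ(x)`. -/
noncomputable def measOf {S : Type*} (μ : S → ℝ) (A : Set S) : ℝ≥0∞ :=
  ∑' x : A, ENNReal.ofReal (μ x)

/-- The Dirichlet form `E(f) = (1/2) ∑_{x,y} μ(x) p(x,y) (f(x) − f(y))²`. -/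
noncomputable def dirichletForm {S : Type*} (μ : S → ℝ) (p : S → S → ℝ) (f : S → ℝ) : ℝ≥0∞ :=
  (1/2 : ℝ≥0∞) * ∑' q : S × S, ENNReal.ofReal (μ q.1 * p q.1 q.2 * (f q.1 - f q.2) ^ 2)

/-- The capacity `cap(A,B) = inf{E(f) : f|_A = 1, f|_B = 0, 0 ≤ f ≤ 1}`. -/
noncomputable def capacity {S : Type*} (μ : S → ℝ) (p : S → S → ℝ) (A B : Set S) : ℝ≥0∞ :=
  ⨅ f : {f : S → ℝ // (∀ x ∈ A, f x = 1) ∧ (∀ x ∈ B, f x = 0) ∧ ∀ x, 0 ≤ f x ∧ f x ≤ 1},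
    dirichletForm μ p f.1

/-!
By the layer-cake formula, `E_ν[f² g] = ∫₀^∞ E_ν[g; f² > t] dt`. Young's inequality
`r s ≤ Φ(r) + Ψ(s)` bounds the mass of an admissible `g` on a set `A` by `ν[A] Ψ⁻¹(K / ν[A])`,
hence by `C cap({f² > t}, B)`, and `min(1, f² / t)` is a test function for that capacity.
Integrating its Dirichlet form in `t` leaves, for each edge, the one-dimensional identity
`∫₀^∞ (min(1, a²/t) - min(1, b²/t))² dt = 2(a² - b²) - 4b² log(a/b)`, which is at most
`4(a - b)²` for `0 ≤ b ≤ a` because `log x ≥ 2(x - 1)/(x + 1)`.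
-/

open MeasureTheory Set Filter Topology

lemma min_one_div_eq_one {a t : ℝ} (ht : 0 < t) (hta : t ≤ a) : min 1 (a / t) = 1 :=
  min_eq_left ((one_le_div ht).mpr hta)

lemma min_one_div_eq_div {a t : ℝ} (ht : 0 < t) (hat : a ≤ t) : min 1 (a / t) = a / t :=
  min_eq_right ((div_le_one ht).mpr hat)

lemma lintegral_Ioi_ofReal_div_sq {c α : ℝ} (hc : 0 ≤ c) (hα : 0 < α) :
    ∫⁻ t in Ioi α, ENNReal.ofReal (c / t ^ 2) = ENNReal.ofReal (c / α) := by
  have hderiv : ∀ t ∈ Ici α, HasDerivAt (fun t => -c * t⁻¹) (c / t ^ 2) t := fun t ht =>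
    ((hasDerivAt_inv (hα.trans_le ht).ne').const_mul (-c)).congr_deriv (by field_simp)
  have hnonneg : ∀ t ∈ Ioi α, 0 ≤ c / t ^ 2 := fun t _ => by positivity
  have hlim : Tendsto (fun t : ℝ => -c * t⁻¹) atTop (𝓝 0) := by
    simpa using tendsto_inv_atTop_zero.const_mul (-c)
  rw [← ofReal_integral_eq_lintegral_ofReal (integrableOn_Ioi_deriv_of_nonneg' hderiv hnonneg hlim)
      ((ae_restrict_iff' measurableSet_Ioi).mpr (Eventually.of_forall hnonneg)),
    integral_Ioi_of_hasDerivAt_of_nonneg' hderiv hnonneg hlim]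
  simp [div_eq_mul_inv]

lemma lintegral_Ioc_ofReal_one_sub_div_sq {a b : ℝ} (hb : 0 ≤ b) (hba : b ≤ a) :
    ∫⁻ t in Ioc b a, ENNReal.ofReal ((1 - b / t) ^ 2)
      = ENNReal.ofReal (a - 2 * b * Real.log (a / b) - b ^ 2 / a) := by
  rcases hb.eq_or_lt with rfl | hb
  · simp
  have hcont : ContinuousOn (fun t => (1 - b / t) ^ 2) (Icc b a) :=
    (continuousOn_const.sub
      (continuousOn_const.div continuousOn_id fun t ht => (hb.trans_le ht.1).ne')).pow 2
  have hderiv : ∀ t ∈ uIcc b a,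
      HasDerivAt (fun t => t - 2 * b * Real.log t - b ^ 2 * t⁻¹) ((1 - b / t) ^ 2) t := by
    intro t ht
    rw [uIcc_of_le hba] at ht
    have ht0 : t ≠ 0 := (hb.trans_le ht.1).ne'
    exact (((hasDerivAt_id' t).sub ((Real.hasDerivAt_log ht0).const_mul (2 * b))).sub
      ((hasDerivAt_inv ht0).const_mul (b ^ 2))).congr_deriv (by field_simp; ring)
  rw [← ofReal_integral_eq_lintegral_ofReal (hcont.integrableOn_Icc.mono_set Ioc_subset_Icc_self)
      (Eventually.of_forall fun _ => sq_nonneg _),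
    ← intervalIntegral.integral_of_le hba,
    intervalIntegral.integral_eq_sub_of_hasDerivAt hderiv
      (hcont.intervalIntegrable_of_Icc hba),
    Real.log_div (hb.trans_le hba).ne' hb.ne']
  congr 1
  field_simp
  ring

lemma two_mul_log_div_le {a b : ℝ} (hb : 0 ≤ b) (hba : b ≤ a) :
    2 * b * Real.log (a / b) ≤ a - b ^ 2 / a := by
  rcases hb.eq_or_lt with rfl | hb
  · simpa using hb.trans hba
  have hlog : Real.log (a / b) ≤ (a / b - (a / b)⁻¹) / 2 := by
    rw [← Real.sinh_log (div_pos (hb.trans_le hba) hb)]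
    exact Real.self_le_sinh_iff.mpr (Real.log_nonneg ((one_le_div hb).mpr hba))
  calc 2 * b * Real.log (a / b) ≤ 2 * b * ((a / b - (a / b)⁻¹) / 2) := by gcongr
    _ = a - b ^ 2 / a := by field_simp

lemma lintegral_ofReal_sq_sub_min_one_div {a b : ℝ} (hb : 0 ≤ b) (hba : b ≤ a) :
    ∫⁻ t in Ioi 0, ENNReal.ofReal ((min 1 (a / t) - min 1 (b / t)) ^ 2)
      = ENNReal.ofReal (2 * (a - b) - 2 * b * Real.log (a / b)) := by
  rcases (hb.trans hba).eq_or_lt with rfl | ha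
  · obtain rfl : b = 0 := le_antisymm hba hb
    simp
  have hsplit : Ioi (0 : ℝ) = (Ioc 0 b ∪ Ioc b a) ∪ Ioi a := by
    rw [Ioc_union_Ioc_eq_Ioc hb hba, Ioc_union_Ioi_eq_Ioi ha.le]
  have hlow : EqOn (fun t => ENNReal.ofReal ((min 1 (a / t) - min 1 (b / t)) ^ 2)) 0 (Ioc 0 b) :=
    fun t ht => by
      simp [min_one_div_eq_one ht.1 (ht.2.trans hba), min_one_div_eq_one ht.1 ht.2]
  have hmid : EqOn (fun t => ENNReal.ofReal ((min 1 (a / t) - min 1 (b / t)) ^ 2))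
      (fun t => ENNReal.ofReal ((1 - b / t) ^ 2)) (Ioc b a) := fun t ht => by
    have ht0 : 0 < t := hb.trans_lt ht.1
    simp only [min_one_div_eq_one ht0 ht.2, min_one_div_eq_div ht0 ht.1.le]
  have htail : EqOn (fun t => ENNReal.ofReal ((min 1 (a / t) - min 1 (b / t)) ^ 2))
      (fun t => ENNReal.ofReal ((a - b) ^ 2 / t ^ 2)) (Ioi a) := fun t ht => by
    have ht0 : 0 < t := ha.trans ht
    simp only [min_one_div_eq_div ht0 ht.le, min_one_div_eq_div ht0 (hba.trans ht.le),
      div_sub_div_same, div_pow]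
  rw [hsplit, lintegral_union measurableSet_Ioi
      ((Ioc_disjoint_Ioi hba).union_left (Ioc_disjoint_Ioi le_rfl)),
    lintegral_union measurableSet_Ioc (Ioc_disjoint_Ioc_of_le le_rfl),
    setLIntegral_congr_fun measurableSet_Ioc hlow, setLIntegral_congr_fun measurableSet_Ioc hmid,
    setLIntegral_congr_fun measurableSet_Ioi htail, lintegral_Ioc_ofReal_one_sub_div_sq hb hba,
    lintegral_Ioi_ofReal_div_sq (sq_nonneg _) ha, Pi.zero_def, lintegral_zero, zero_add,
    ← ENNReal.ofReal_add (by linarith [two_mul_log_div_le hb hba]) (by positivity)]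
  congr 1
  field_simp
  ring

lemma sq_sub_sq_sub_log_le {u v : ℝ} (hv : 0 ≤ v) (hvu : v ≤ u) :
    2 * (u ^ 2 - v ^ 2) - 2 * v ^ 2 * Real.log (u ^ 2 / v ^ 2) ≤ 4 * (u - v) ^ 2 := by
  rcases hv.eq_or_lt with rfl | hv
  · simpa using mul_le_mul_of_nonneg_right (by norm_num : (2 : ℝ) ≤ 4) (sq_nonneg u)
  have hsum : 0 < u ^ 2 + v ^ 2 := by positivity
  have hlog : 2 * (u ^ 2 - v ^ 2) / (u ^ 2 + v ^ 2) ≤ Real.log (u ^ 2 / v ^ 2) := by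
    have := Real.le_log_one_add_of_nonneg (x := u ^ 2 / v ^ 2 - 1)
      (sub_nonneg.mpr ((one_le_div (by positivity)).mpr (by gcongr)))
    rw [add_sub_cancel, show u ^ 2 / v ^ 2 - 1 + 2 = (u ^ 2 + v ^ 2) / v ^ 2 by field_simp; ring]
      at this
    convert this using 1
    field_simp
  calc 2 * (u ^ 2 - v ^ 2) - 2 * v ^ 2 * Real.log (u ^ 2 / v ^ 2)
      ≤ 2 * (u ^ 2 - v ^ 2) - 2 * v ^ 2 * (2 * (u ^ 2 - v ^ 2) / (u ^ 2 + v ^ 2)) := by gcongr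
    _ = 2 * (u ^ 2 - v ^ 2) ^ 2 / (u ^ 2 + v ^ 2) := by field_simp; ring
    _ ≤ 4 * (u - v) ^ 2 := by
      rw [div_le_iff₀ hsum]
      nlinarith [sq_nonneg ((u - v) ^ 2)]

lemma lintegral_ofReal_sq_sub_min_one_div_sq_le (x y : ℝ) :
    ∫⁻ t in Ioi 0, ENNReal.ofReal ((min 1 (x ^ 2 / t) - min 1 (y ^ 2 / t)) ^ 2)
      ≤ ENNReal.ofReal (4 * (x - y) ^ 2) := by
  wlog h : |y| ≤ |x| generalizing x y
  · have hyx := this y x (le_of_not_ge h)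
    simp only [← neg_sub x y, ← neg_sub (min 1 (x ^ 2 / _)), neg_sq] at hyx
    exact hyx
  rw [← sq_abs x, ← sq_abs y, lintegral_ofReal_sq_sub_min_one_div (sq_nonneg _) (by gcongr)]
  refine ENNReal.ofReal_le_ofReal ((sq_sub_sq_sub_log_le (abs_nonneg y) h).trans ?_)
  rw [← sq_abs (x - y)]
  gcongr
  exact abs_sub_abs_le_abs_sub x y

section Capacity

variable {S : Type*} (μ : S → ℝ) (p : S → S → ℝ)

lemma capacity_le_dirichletForm {A B : Set S} {h : S → ℝ} (hA : ∀ x ∈ A, h x = 1)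
    (hB : ∀ x ∈ B, h x = 0) (h01 : ∀ x, 0 ≤ h x ∧ h x ≤ 1) :
    capacity μ p A B ≤ dirichletForm μ p h :=
  iInf_le_of_le ⟨h, hA, hB, h01⟩ le_rfl

lemma capacity_superlevelSet_le {B : Set S} {h : S → ℝ} (hh : ∀ x, 0 ≤ h x)
    (hB : ∀ x ∈ B, h x = 0) {t : ℝ} (ht : 0 < t) :
    capacity μ p {x | t < h x} B ≤ dirichletForm μ p (fun x => min 1 (h x / t)) :=
  capacity_le_dirichletForm μ p (fun x hx => min_one_div_eq_one ht (le_of_lt hx))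
    (fun x hx => by simp [hB x hx]) (fun x => ⟨le_min zero_le_one (by have := hh x; positivity),
      min_le_left _ _⟩)

variable [Countable S]

lemma measurable_dirichletForm_min_one_div (h : S → ℝ) :
    Measurable fun t : ℝ => dirichletForm μ p (fun x => min 1 (h x / t)) :=
  (Measurable.tsum fun _ => by fun_prop).const_mul _

lemma lintegral_dirichletForm_min_one_div_sq_le (hμ : ∀ x, 0 ≤ μ x) (hp : ∀ x y, 0 ≤ p x y)
    (f : S → ℝ) :
    ∫⁻ t in Ioi 0, dirichletForm μ p (fun x => min 1 (f x ^ 2 / t))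
      ≤ 4 * dirichletForm μ p f := by
  simp only [dirichletForm]
  rw [lintegral_const_mul _ (Measurable.tsum fun _ => by fun_prop),
    lintegral_tsum fun _ => by fun_prop, mul_left_comm 4]
  gcongr _ * ?_
  rw [← ENNReal.tsum_mul_left]
  gcongr with q
  have hc := mul_nonneg (hμ q.1) (hp q.1 q.2)
  simp only [ENNReal.ofReal_mul hc]
  rw [lintegral_const_mul' _ _ ENNReal.ofReal_ne_top, mul_left_comm]
  gcongr
  calc _ ≤ ENNReal.ofReal (4 * (f q.1 - f q.2) ^ 2) := lintegral_ofReal_sq_sub_min_one_div_sq_le _ _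
    _ = _ := by rw [ENNReal.ofReal_mul zero_le_four, ENNReal.ofReal_ofNat]

end Capacity

section OrliczDuality

variable {S : Type*} {ν : S → ℝ}

lemma ofReal_mul_le_add_legendreDual (Φ : ℝ → ℝ≥0∞) {r : ℝ} (hr : 0 ≤ r) (y : ℝ) :
    ENNReal.ofReal (r * y) ≤ Φ r + legendreDual Φ y :=
  tsub_le_iff_left.mp (le_iSup (fun s : Ici (0 : ℝ) => ENNReal.ofReal (s.1 * y) - Φ s.1) ⟨r, hr⟩)

lemma measOf_ne_top (hν : ∀ x, 0 ≤ ν x) (hνs : Summable ν) (A : Set S) : measOf ν A ≠ ⊤ := by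
  rw [measOf, ← ENNReal.ofReal_tsum_of_nonneg (fun x : A => hν x) (hνs.subtype A)]
  exact ENNReal.ofReal_ne_top

variable {Φ : ℝ → ℝ≥0∞} {K : ℝ≥0∞} {g : S → ℝ} {A : Set S}

lemma tsum_ofReal_mul_le_measOf_mul (hν : ∀ x, 0 ≤ ν x)
    (hgK : ∑' x, ENNReal.ofReal (ν x) * legendreDual Φ (g x) ≤ K)
    (hA0 : measOf ν A ≠ 0) (hA : measOf ν A ≠ ⊤) {s : ℝ}
    (hs : K / measOf ν A < legendreDual Φ s) :
    ∑' x : A, ENNReal.ofReal (ν x * g x) ≤ measOf ν A * ENNReal.ofReal s := by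
  set m := measOf ν A with hm
  obtain ⟨⟨r, hr⟩, hlt⟩ := lt_iSup_iff.mp hs
  have hrs : K / m + Φ r < ENNReal.ofReal (r * s) := lt_tsub_iff_right.mp hlt
  have hr0 : ENNReal.ofReal r ≠ 0 := by
    intro h0
    rw [ENNReal.ofReal_eq_zero.mp h0 |>.antisymm hr, zero_mul, ENNReal.ofReal_zero] at hrs
    exact not_lt_zero hrs
  have hyoung : ENNReal.ofReal r * ∑' x : A, ENNReal.ofReal (ν x * g x) ≤ m * Φ r + K :=
    calc ENNReal.ofReal r * ∑' x : A, ENNReal.ofReal (ν x * g x)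
        = ∑' x : A, ENNReal.ofReal (ν x) * ENNReal.ofReal (r * g x) := by
          rw [← ENNReal.tsum_mul_left]
          congr with x
          rw [← ENNReal.ofReal_mul hr, ← ENNReal.ofReal_mul (hν x), mul_left_comm]
      _ ≤ ∑' x : A, ENNReal.ofReal (ν x) * (Φ r + legendreDual Φ (g x)) := by
          gcongr
          exact ofReal_mul_le_add_legendreDual Φ hr _
      _ ≤ m * Φ r + K := by
          simp only [mul_add, ENNReal.tsum_add, ENNReal.tsum_mul_right, hm, measOf]
          gcongr
          exact (ENNReal.tsum_comp_le_tsum_of_injective Subtype.val_injective _).trans hgK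
  refine (ENNReal.mul_le_mul_iff_right hr0 ENNReal.ofReal_ne_top).mp (hyoung.trans ?_)
  calc m * Φ r + K = m * (K / m + Φ r) := by rw [mul_add, ENNReal.mul_div_cancel hA0 hA, add_comm]
    _ ≤ m * ENNReal.ofReal (r * s) := by gcongr
    _ = ENNReal.ofReal r * (m * ENNReal.ofReal s) := by rw [ENNReal.ofReal_mul hr]; ring

lemma tsum_ofReal_mul_le_measOf_mul_pseudoInv (hν : ∀ x, 0 ≤ ν x)
    (hgK : ∑' x, ENNReal.ofReal (ν x) * legendreDual Φ (g x) ≤ K) (hA : measOf ν A ≠ ⊤) :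
    ∑' x : A, ENNReal.ofReal (ν x * g x)
      ≤ measOf ν A * pseudoInv (legendreDual Φ) (K / measOf ν A) := by
  by_cases hA0 : measOf ν A = 0
  · have hνA : ∀ x : A, ν x = 0 := fun x =>
      (ENNReal.ofReal_eq_zero.mp (ENNReal.tsum_eq_zero.mp hA0 x)).antisymm (hν x)
    simp [hνA]
  refine (ENNReal.mul_div_cancel hA0 hA).symm.trans_le (mul_le_mul_right (le_sInf ?_) _)
  rintro _ ⟨s, ⟨-, hs⟩, rfl⟩
  exact ENNReal.div_le_of_le_mul' (tsum_ofReal_mul_le_measOf_mul hν hgK hA0 hA hs)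

end OrliczDuality

lemma tsum_ofReal_mul_eq_lintegral_tsum_superlevelSet {S : Type*} [Countable S] {w : S → ℝ}
    (hw : ∀ x, 0 ≤ w x) (a : S → ℝ) :
    ∑' x, ENNReal.ofReal (w x * a x)
      = ∫⁻ t in Ioi 0, ∑' x : {x | t < a x}, ENNReal.ofReal (w x) := by
  have hind : ∀ t, ∑' x : {x | t < a x}, ENNReal.ofReal (w x)
      = ∑' x, (Iio (a x)).indicator (fun _ => ENNReal.ofReal (w x)) t := fun t => by
    rw [tsum_subtype {x | t < a x} (fun x => ENNReal.ofReal (w x))]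
    rfl
  simp_rw [hind]
  rw [lintegral_tsum fun x => (measurable_const.indicator measurableSet_Iio).aemeasurable]
  congr with x
  rw [lintegral_indicator_const measurableSet_Iio, Measure.restrict_apply measurableSet_Iio,
    Iio_inter_Ioi, Real.volume_Ioo, sub_zero, ENNReal.ofReal_mul (hw x)]

theorem orliczNorm_le_of_measure_capacity_general {S : Type*} [Countable S]
    (μ : S → ℝ) (p : S → S → ℝ)
    (hμ : ∀ x, 0 ≤ μ x)
    (hp : ∀ x y, 0 ≤ p x y)
    (ν : S → ℝ) (hν : ∀ x, 0 ≤ ν x) (hν1 : ∑' x, ν x = 1)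
    (Φ Ψ : ℝ → ℝ≥0∞) (hΨ : Ψ = legendreDual Φ)
    (K : ℝ≥0∞)
    (B : Set S) (C : ℝ≥0∞)
    (hMC : ∀ A : Set S, A ⊆ Bᶜ →
      measOf ν A * pseudoInv Ψ (K / measOf ν A) ≤ C * capacity μ p A B) :
    ∀ f : S → ℝ, Summable (fun x => μ x * f x ^ 2) → (∀ x ∈ B, f x = 0) →
      orliczNorm ν Ψ K (fun x => f x ^ 2) ≤ 4 * C * dirichletForm μ p f := by
  subst hΨ
  intro f _ hfB
  have hνs : Summable ν := by
    by_contra h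
    simp [tsum_eq_zero_of_not_summable h] at hν1
  refine iSup_le fun ⟨g, hg, hgK⟩ => ?_
  have hlevel : ∀ t ∈ Ioi (0 : ℝ), ∑' x : {x | t < f x ^ 2}, ENNReal.ofReal (ν x * g x)
      ≤ C * dirichletForm μ p (fun x => min 1 (f x ^ 2 / t)) := fun t ht => by
    have hA : {x | t < f x ^ 2} ⊆ Bᶜ := fun x (hx : t < f x ^ 2) hxB => by
      rw [hfB x hxB, zero_pow two_ne_zero] at hx
      exact lt_asymm ht hx
    calc _ ≤ _ := tsum_ofReal_mul_le_measOf_mul_pseudoInv hν hgK (measOf_ne_top hν hνs _)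
      _ ≤ C * capacity μ p _ B := hMC _ hA
      _ ≤ _ := by
        gcongr
        exact capacity_superlevelSet_le μ p (fun x => sq_nonneg (f x))
          (fun x hx => by simp [hfB x hx]) ht
  calc ∑' x, ENNReal.ofReal (ν x * |f x ^ 2| * g x)
      = ∑' x, ENNReal.ofReal (ν x * g x * f x ^ 2) := by
        simp only [abs_pow, sq_abs, mul_right_comm _ (f _ ^ 2)]
    _ = ∫⁻ t in Ioi 0, ∑' x : {x | t < f x ^ 2}, ENNReal.ofReal (ν x * g x) :=
        tsum_ofReal_mul_eq_lintegral_tsum_superlevelSet (fun x => mul_nonneg (hν x) (hg x)) _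
    _ ≤ ∫⁻ t in Ioi 0, C * dirichletForm μ p (fun x => min 1 (f x ^ 2 / t)) :=
        setLIntegral_mono' measurableSet_Ioi hlevel
    _ = C * ∫⁻ t in Ioi 0, dirichletForm μ p (fun x => min 1 (f x ^ 2 / t)) :=
        lintegral_const_mul _ (measurable_dirichletForm_min_one_div μ p _)
    _ ≤ 4 * C * dirichletForm μ p f := by
        rw [mul_comm 4 C, mul_assoc]
        gcongr
        exact lintegral_dirichletForm_min_one_div_sq_le μ p hμ hp f

/-- Measure-capacity inequality implies the Orlicz–Birnbaum estimate:
if `ν[A] Ψ⁻¹(K/ν[A]) ≤ C cap(A,B)` for all `A ⊆ S\B`, then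
`‖f²‖_{Φ,ν,K} ≤ 4C E(f)` for every `f ∈ ℓ²(μ)` vanishing on `B`. -/
theorem orliczNorm_le_of_measure_capacity {S : Type*} [Countable S]
    (μ : S → ℝ) (p : S → S → ℝ)
    (hμ : ∀ x, 0 ≤ μ x) (hμ1 : ∑' x, μ x = 1)
    (hp : ∀ x y, 0 ≤ p x y)
    (hdb : ∀ x y, μ x * p x y = μ y * p y x)
    (ν : S → ℝ) (hν : ∀ x, 0 ≤ ν x) (hν1 : ∑' x, ν x = 1)
    (Φ Ψ : ℝ → ℝ≥0∞) (hΦ : IsYoung Φ) (hΨ : Ψ = legendreDual Φ)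
    (K : ℝ≥0∞) (hK : 0 < K)
    (B : Set S) (hB : B.Nonempty) (C : ℝ≥0∞)
    (hMC : ∀ A : Set S, A ⊆ Bᶜ →
      measOf ν A * pseudoInv Ψ (K / measOf ν A) ≤ C * capacity μ p A B) :
    ∀ f : S → ℝ, Summable (fun x => μ x * f x ^ 2) → (∀ x ∈ B, f x = 0) →
      orliczNorm ν Ψ K (fun x => f x ^ 2) ≤ 4 * C * dirichletForm μ p f :=
  orliczNorm_le_of_measure_capacity_general μ p hμ hp ν hν hν1 Φ Ψ hΨ K B C hMC
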